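/- arXiv:1604.06323 — 3 statements merged into one kernel-verified Lean document; each statement's English description precedes it below -/
import Mathlib

section
/- Let T_m be the recursively defined m-linear forms (T₂(x₁,x₂) = (x₂¹+x₂²)x₁¹ + (x₂¹−x₂²)x₁² and T_m built from T_{m-1} via backward shifts as in the context). Then for all m ≥ 2 and all p ≥ 2, ‖T_m‖ ≤ 2^{m-1}, where the first factor carries the ℓ^p norm and the remaining factors the ℓ^∞ norm. -/
/-- The recursively defined `(k+2)`-linear forms of Nogueira–Núñez-Alarcón–Pellegrino, acting on
sequences (the form of index `k` corresponds to `m = k + 2` and only depends on the coordinates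
`< 2^{k+1} = 2^{m-1}`).  `Tm 0` is
`T₂(x₀,x₁) = (x₁⁰+x₁¹)x₀⁰ + (x₁⁰−x₁¹)x₀¹`, and `Tm (k+1)` is built from `Tm k` via the
backward shifts `S^{2^{m-2}}, S^{2^{m-2}}, S^{2^{m-3}}, …, S²` as in the paper. -/
def Tm : (k : ℕ) → (Fin (k + 2) → (ℕ → ℝ)) → ℝ
  | 0, x => (x 1 0 + x 1 1) * x 0 0 + (x 1 0 - x 1 1) * x 0 1
  | (k + 1), x =>
      (x (Fin.last (k + 2)) 0 + x (Fin.last (k + 2)) 1) * Tm k (fun i => x i.castSucc)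
      + (x (Fin.last (k + 2)) 0 - x (Fin.last (k + 2)) 1) *
          Tm k (fun i => fun n => x i.castSucc (n + 2 ^ (k + 2 - max i.val 1)))

lemma abs_sum_abs_sub (a b : ℝ) (ha : |a| ≤ 1) (hb : |b| ≤ 1) :
    |a + b| + |a - b| ≤ 2 := by
  rcases abs_cases (a + b) with ⟨h1, _⟩ | ⟨h1, _⟩ <;>
    rcases abs_cases (a - b) with ⟨h2, _⟩ | ⟨h2, _⟩ <;>
    rcases abs_le.mp ha with ⟨_, _⟩ <;> rcases abs_le.mp hb with ⟨_, _⟩ <;> linarith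

lemma Tm_sup_bound : ∀ (k : ℕ) (x : Fin (k + 2) → (ℕ → ℝ)),
    (∀ i n, |x i n| ≤ 1) → |Tm k x| ≤ 2 ^ (k + 1) := by
  intro k
  induction k with
  | zero =>
      intro x h
      have key := abs_sum_abs_sub (x 1 0) (x 1 1) (h 1 0) (h 1 1)
      have h00 := h 0 0
      have h01 := h 0 1
      have := abs_nonneg (x 1 0 + x 1 1)
      have := abs_nonneg (x 1 0 - x 1 1)
      calc |Tm 0 x| ≤ |(x 1 0 + x 1 1) * x 0 0| + |(x 1 0 - x 1 1) * x 0 1| := by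
            show |(x 1 0 + x 1 1) * x 0 0 + (x 1 0 - x 1 1) * x 0 1| ≤ _
            exact abs_add_le _ _
        _ = |x 1 0 + x 1 1| * |x 0 0| + |x 1 0 - x 1 1| * |x 0 1| := by
            rw [abs_mul, abs_mul]
        _ ≤ 2 ^ (0 + 1) := by
            have e1 : |x 1 0 + x 1 1| * |x 0 0| ≤ |x 1 0 + x 1 1| :=
              mul_le_of_le_one_right ‹0 ≤ |x 1 0 + x 1 1|› h00
            have e2 : |x 1 0 - x 1 1| * |x 0 1| ≤ |x 1 0 - x 1 1| :=
              mul_le_of_le_one_right ‹0 ≤ |x 1 0 - x 1 1|› h01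
            norm_num
            linarith
  | succ k ih =>
      intro x h
      have hT1 := ih (fun i => x i.castSucc) (fun i n => h _ _)
      have hT2 := ih (fun i => fun n => x i.castSucc (n + 2 ^ (k + 2 - max i.val 1)))
        (fun i n => h _ _)
      have key := abs_sum_abs_sub (x (Fin.last (k + 2)) 0) (x (Fin.last (k + 2)) 1)
        (h _ 0) (h _ 1)
      have hn1 := abs_nonneg (x (Fin.last (k + 2)) 0 + x (Fin.last (k + 2)) 1)
      have hn2 := abs_nonneg (x (Fin.last (k + 2)) 0 - x (Fin.last (k + 2)) 1)
      have hTn1 := abs_nonneg (Tm k (fun i => x i.castSucc))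
      have hTn2 := abs_nonneg (Tm k (fun i => fun n => x i.castSucc (n + 2 ^ (k + 2 - max i.val 1))))
      calc |Tm (k + 1) x|
          ≤ |x (Fin.last (k + 2)) 0 + x (Fin.last (k + 2)) 1| * |Tm k (fun i => x i.castSucc)|
            + |x (Fin.last (k + 2)) 0 - x (Fin.last (k + 2)) 1| *
              |Tm k (fun i => fun n => x i.castSucc (n + 2 ^ (k + 2 - max i.val 1)))| := by
            show |_ * _ + _ * _| ≤ _
            rw [← abs_mul, ← abs_mul]
            exact abs_add_le _ _
        _ ≤ 2 ^ (k + 1 + 1) := by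
            have e : (2 : ℝ) ^ (k + 1 + 1) = 2 * 2 ^ (k + 1) := by ring
            rw [e]
            nlinarith [pow_pos (by norm_num : (0:ℝ) < 2) (k + 1)]

/-- For all `m = k+2 ≥ 2` and `p ≥ 2`, the recursively defined form `T_m` satisfies
`‖T_m‖ ≤ 2^{m-1}` where the first factor carries the `ℓ^p` norm and the remaining factors the
`ℓ^∞` norm. -/
theorem stmt5 (p : ℝ) (hp : 2 ≤ p) (k : ℕ) (x : Fin (k + 2) → (ℕ → ℝ))
    (hsupp : ∀ i n, 2 ^ (k + 1) ≤ n → x i n = 0)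
    (h1 : (∑ n ∈ Finset.range (2 ^ (k + 1)), |x 0 n| ^ p) ^ (1 / p) ≤ 1)
    (h2 : ∀ i, i ≠ 0 → ∀ n, |x i n| ≤ 1) :
    |Tm k x| ≤ 2 ^ (k + 1) := by
  have hp0 : (0 : ℝ) < p := by linarith
  have hsum_nonneg : (0 : ℝ) ≤ ∑ n ∈ Finset.range (2 ^ (k + 1)), |x 0 n| ^ p :=
    Finset.sum_nonneg fun n _ => Real.rpow_nonneg (abs_nonneg _) _
  have hsum_le : (∑ n ∈ Finset.range (2 ^ (k + 1)), |x 0 n| ^ p) ≤ 1 := by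
    have := Real.rpow_le_rpow (Real.rpow_nonneg hsum_nonneg _) h1 (le_of_lt hp0)
    rwa [Real.one_rpow, one_div, Real.rpow_inv_rpow hsum_nonneg (ne_of_gt hp0)] at this
  have hx0 : ∀ n, |x 0 n| ≤ 1 := by
    intro n
    by_cases hn : n < 2 ^ (k + 1)
    · have hterm : |x 0 n| ^ p ≤ ∑ m ∈ Finset.range (2 ^ (k + 1)), |x 0 m| ^ p :=
        Finset.single_le_sum (fun m _ => Real.rpow_nonneg (abs_nonneg _) _)
          (Finset.mem_range.mpr hn)
      have h1p : |x 0 n| ^ p ≤ 1 := le_trans hterm hsum_le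
      by_contra hgt
      push_neg at hgt
      have : (1 : ℝ) < |x 0 n| ^ p :=
        Real.one_lt_rpow_iff_of_pos (lt_trans one_pos hgt) |>.mpr (Or.inl ⟨hgt, hp0⟩)
      linarith
    · rw [hsupp 0 n (le_of_not_gt hn)]
      simp
  refine Tm_sup_bound k x (fun i n => ?_)
  by_cases hi : i = 0
  · subst hi; exact hx0 n
  · exact h2 i hi n
end

section
/- Let T_m be the recursively defined m-linear forms as in the context, with first factor carrying the ℓ^p norm (p ≥ 2) and the remaining factors the ℓ^∞ norm. Then ‖T_m‖ ≥ 2·‖T_{m-1}‖ for all m ≥ 3; consequently ‖T_m‖ = 2^{m-1} for all m ≥ 2. -/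
/-- The values `|Tm k x|` over the unit polyball of `(ℝ^{2^{k+1}}, ℓ^p) × (ℝ^{2^{k+1}}, ℓ^∞)^{k+1}`;
its supremum is the operator norm of `Tm k`. -/
def TmNormSet (p : ℝ) (k : ℕ) : Set ℝ :=
  {t : ℝ | ∃ x : Fin (k + 2) → (ℕ → ℝ),
    (∀ i n, 2 ^ (k + 1) ≤ n → x i n = 0) ∧
    (∑ n ∈ Finset.range (2 ^ (k + 1)), |x 0 n| ^ p) ^ (1 / p) ≤ 1 ∧
    (∀ i, i ≠ 0 → ∀ n, |x i n| ≤ 1) ∧ t = |Tm k x|}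

/-!
Every coordinate of a point of the `ℓ^p` unit ball has absolute value at most `1`, and
`|(a + b) u + (a - b) v| ≤ |u + v| + |u - v| = 2 max (|u|, |v|)` for `|a|, |b| ≤ 1`, so the recursion
at most doubles the bound at each step: `|T_m| ≤ 2^{m-1}` on the unit polyball. Conversely,
`e₁ + e₂` in the last slot turns `T_m` into `2 T_{m-1}`, and `T_2(e₁, e₁ + e₂) = 2`, so the bound
is attained.
-/

open Finset

lemma abs_add_mul_add_sub_mul_le {a b u v C : ℝ} (ha : |a| ≤ 1) (hb : |b| ≤ 1) (hu : |u| ≤ C)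
    (hv : |v| ≤ C) : |(a + b) * u + (a - b) * v| ≤ 2 * C := by
  have hsum : |u + v| + |u - v| ≤ 2 * C := by
    obtain ⟨hu₁, hu₂⟩ := abs_le.mp hu
    obtain ⟨hv₁, hv₂⟩ := abs_le.mp hv
    rcases abs_cases (u + v) with ⟨h₁, -⟩ | ⟨h₁, -⟩ <;>
      rcases abs_cases (u - v) with ⟨h₂, -⟩ | ⟨h₂, -⟩ <;> linarith
  calc |(a + b) * u + (a - b) * v| = |a * (u + v) + b * (u - v)| := by ring_nf
    _ ≤ |a| * |u + v| + |b| * |u - v| := by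
      rw [← abs_mul, ← abs_mul]; exact abs_add_le _ _
    _ ≤ 1 * |u + v| + 1 * |u - v| := by gcongr
    _ ≤ 2 * C := by linarith

lemma abs_le_one_of_sum_rpow_le_one {ι : Type*} {s : Finset ι} {f : ι → ℝ} {p : ℝ} (hp : 0 < p)
    (h : (∑ n ∈ s, |f n| ^ p) ^ (1 / p) ≤ 1) {n : ι} (hn : n ∈ s) : |f n| ≤ 1 :=
  calc |f n| = (|f n| ^ p) ^ (1 / p) := by rw [one_div, Real.rpow_rpow_inv (abs_nonneg _) hp.ne']
    _ ≤ (∑ n ∈ s, |f n| ^ p) ^ (1 / p) := by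
      gcongr
      exact single_le_sum (fun i _ => Real.rpow_nonneg (abs_nonneg (f i)) p) hn
    _ ≤ 1 := h

lemma abs_Tm_le : ∀ (k : ℕ) (x : Fin (k + 2) → ℕ → ℝ), (∀ i n, |x i n| ≤ 1) →
    |Tm k x| ≤ 2 ^ (k + 1)
  | 0, x, hx => by
    simpa [Tm] using abs_add_mul_add_sub_mul_le (hx 1 0) (hx 1 1) (hx 0 0) (hx 0 1)
  | k + 1, x, hx => by
    rw [Tm, pow_succ']
    exact abs_add_mul_add_sub_mul_le (hx _ 0) (hx _ 1)
      (abs_Tm_le k _ fun i n => hx _ n) (abs_Tm_le k _ fun i n => hx _ _)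

lemma abs_indicator_one_le_one {α : Type*} (s : Set α) (a : α) :
    |s.indicator (1 : α → ℝ) a| ≤ 1 := by
  classical
  rw [Set.indicator_apply]; split_ifs <;> simp

lemma Tm_succ_snoc_indicator (k : ℕ) (x : Fin (k + 2) → ℕ → ℝ) :
    Tm (k + 1) (Fin.snoc x ((Set.Iio 2).indicator 1)) = 2 * Tm k x := by
  simp only [Tm, Fin.snoc_last, Fin.snoc_castSucc, Set.indicator_apply, Set.mem_Iio]
  norm_num

lemma le_two_pow_of_mem_TmNormSet {p : ℝ} (hp : 0 < p) {k : ℕ} {t : ℝ}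
    (ht : t ∈ TmNormSet p k) : t ≤ 2 ^ (k + 1) := by
  obtain ⟨x, hvanish, hlp, hsup, rfl⟩ := ht
  refine abs_Tm_le k x fun i n => ?_
  rcases eq_or_ne i 0 with rfl | hi
  · rcases lt_or_ge n (2 ^ (k + 1)) with hn | hn
    · exact abs_le_one_of_sum_rpow_le_one hp hlp (mem_range.mpr hn)
    · simp [hvanish 0 n hn]
  · exact hsup i hi n

lemma two_mem_TmNormSet_zero {p : ℝ} (hp : p ≠ 0) : (2 : ℝ) ∈ TmNormSet p 0 := by
  refine ⟨![Pi.single 0 1, (Set.Iio 2).indicator 1], fun i n hn => ?_, ?_, fun i hi n => ?_, ?_⟩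
  · fin_cases i <;> simp [Pi.single_apply, Set.indicator_apply] <;> omega
  · simp [sum_range_succ, Real.zero_rpow hp]
  · obtain rfl : i = 1 := by fin_cases i <;> simp_all
    exact abs_indicator_one_le_one _ n
  · norm_num [Tm]

lemma two_mul_mem_TmNormSet_succ {p : ℝ} (hp : p ≠ 0) {k : ℕ} {t : ℝ}
    (ht : t ∈ TmNormSet p k) : 2 * t ∈ TmNormSet p (k + 1) := by
  obtain ⟨x, hvanish, hlp, hsup, rfl⟩ := ht
  have hfirst : (Fin.snoc x ((Set.Iio 2).indicator 1) : Fin (k + 3) → ℕ → ℝ) 0 = x 0 := by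
    rw [← Fin.castSucc_zero, Fin.snoc_castSucc]
  have hpow : 2 ^ (k + 1) ≤ 2 ^ (k + 2) := Nat.pow_le_pow_right two_pos (by omega)
  refine ⟨Fin.snoc x ((Set.Iio 2).indicator 1), fun i n hn => ?_, ?_, fun i hi n => ?_, ?_⟩
  · induction i using Fin.lastCases with
    | last =>
      have : 2 ≤ 2 ^ (k + 1 + 1) := Nat.le_self_pow (by omega) 2
      rw [Fin.snoc_last, Set.indicator_of_notMem (by simp only [Set.mem_Iio]; omega)]
    | cast j => rw [Fin.snoc_castSucc, hvanish j n (by omega)]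
  · rwa [hfirst, ← sum_subset (range_subset_range.mpr hpow) fun n _ hn => by
      rw [hvanish 0 n (by simpa using hn), abs_zero, Real.zero_rpow hp]]
  · induction i using Fin.lastCases with
    | last => simpa using abs_indicator_one_le_one _ n
    | cast j =>
      rw [Fin.snoc_castSucc]
      exact hsup j (fun hj => hi (by simp [hj])) n
  · rw [Tm_succ_snoc_indicator, abs_mul, abs_two]

lemma two_pow_mem_TmNormSet {p : ℝ} (hp : p ≠ 0) : ∀ k : ℕ, (2 : ℝ) ^ (k + 1) ∈ TmNormSet p k
  | 0 => by simpa using two_mem_TmNormSet_zero hp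
  | k + 1 => by
    rw [pow_succ']
    exact two_mul_mem_TmNormSet_succ hp (two_pow_mem_TmNormSet hp k)

lemma isGreatest_TmNormSet {p : ℝ} (hp : 0 < p) (k : ℕ) :
    IsGreatest (TmNormSet p k) (2 ^ (k + 1)) :=
  ⟨two_pow_mem_TmNormSet hp.ne' k, fun _ => le_two_pow_of_mem_TmNormSet hp⟩

/-- For `p ≥ 2`: `‖T_m‖ ≥ 2‖T_{m-1}‖` for all `m ≥ 3`, and consequently `‖T_m‖ = 2^{m-1}`
for all `m ≥ 2` (here `m = k + 2`). -/
theorem stmt6 (p : ℝ) (hp : 2 ≤ p) :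
    (∀ k : ℕ, 2 * sSup (TmNormSet p k) ≤ sSup (TmNormSet p (k + 1))) ∧
    (∀ k : ℕ, sSup (TmNormSet p k) = 2 ^ (k + 1)) := by
  have hsSup (k : ℕ) : sSup (TmNormSet p k) = 2 ^ (k + 1) :=
    (isGreatest_TmNormSet (by linarith) k).csSup_eq
  refine ⟨fun k => ?_, hsSup⟩
  rw [hsSup, hsSup]
  exact (pow_succ' 2 (k + 1)).ge
end

section
/- For p = 2 and every m ≥ 2, the optimal constant C in the inequality (Σ_{i₁} (Σ_{i₂,…,i_m} |T(e_{i₁},…,e_{i_m})|²)^{(1/2)·2})^{1/2} ≤ C‖T‖ for bounded m-linear forms T : ℓ₂ × c₀ × ⋯ × c₀ → ℝ is C = 1. -/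
open Real

noncomputable section

/-- `c₀`: the space of real sequences vanishing at infinity, with the sup norm. -/
abbrev Czero := ZeroAtInftyContinuousMap ℕ ℝ

noncomputable instance : SeminormedAddCommGroup (Czero →L[ℝ] ℝ) :=
  ContinuousLinearMap.toSeminormedAddCommGroup

noncomputable instance : NormedSpace ℝ (Czero →L[ℝ] ℝ) :=
  ContinuousLinearMap.toNormedSpace

noncomputable instance (k : ℕ) :
    SeminormedAddCommGroup (ContinuousMultilinearMap ℝ (fun _ : Fin k => Czero) ℝ) :=
  ContinuousMultilinearMap.seminormedAddCommGroup

noncomputable instance (k : ℕ) :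
    NormedSpace ℝ (ContinuousMultilinearMap ℝ (fun _ : Fin k => Czero) ℝ) :=
  ContinuousMultilinearMap.normedSpace

/-- The canonical unit vector `e_k` in `c₀`. -/
def e0 (k : ℕ) : Czero :=
{ toFun := fun n => if n = k then 1 else 0,
  continuous_toFun := continuous_of_discreteTopology,
  zero_at_infty' := by
    rw [cocompact_eq_atTop (α := ℕ)]
    refine Filter.Tendsto.congr' ?_ tendsto_const_nhds
    filter_upwards [Filter.eventually_gt_atTop k] with n hn
    simp [Nat.ne_of_gt hn] }

/-- The canonical unit vector `e_j` in `ℓ_p`. -/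
def ep (p : ℝ) [Fact (1 ≤ ENNReal.ofReal p)] (j : ℕ) :
    lp (fun _ : ℕ => ℝ) (ENNReal.ofReal p) := lp.single _ j 1

/-!
The inequality with `C = 1`: fix signs `ε j t = ±1` and test `T` against the vectors
`u_j = ∑_{t<N} ε j t • e_t`, of norm at most `1` in `c₀`. By multilinearity, `T (e_p) u` is a
signed sum of the coefficients `T (e_p) (e_i)`, and since `x ↦ T x u` has norm at most `‖T‖`,
Bessel's inequality bounds the sum over `p` of their squares by `‖T‖²`. The sign patterns
`∏_j ε j (i j)` are orthogonal as functions of `ε`, so averaging over all `ε` turns the squared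
signed sums into the full sum of squared coefficients.

Optimality: `T x y = ⟪e_0, x⟫ ∏_j y_j 0` has norm at most `1` and coefficient `1` at
`(e_0, …, e_0)`.
-/

open Finset

theorem Orthonormal.sum_sq_apply_le_sq_opNorm {E ι : Type*} [NormedAddCommGroup E]
    [InnerProductSpace ℝ E] [CompleteSpace E] {v : ι → E} (hv : Orthonormal ℝ v)
    (L : E →L[ℝ] ℝ) (s : Finset ι) : ∑ i ∈ s, L (v i) ^ 2 ≤ ‖L‖ ^ 2 := by
  set y := (InnerProductSpace.toDual ℝ E).symm L
  have hL : ∀ x, L x = inner ℝ y x := fun x => by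
    simp [y, InnerProductSpace.toDual_symm_apply]
  have hy : ‖y‖ = ‖L‖ := by simp [y]
  simpa [hL, real_inner_comm, hy] using hv.sum_inner_products_le (s := s) y

theorem lp.orthonormal_single_one {ι : Type*} [DecidableEq ι] :
    Orthonormal ℝ fun i : ι => lp.single (E := fun _ : ι => ℝ) 2 i (1 : ℝ) := by
  rw [orthonormal_iff_ite]
  intro i j
  rw [lp.inner_single_left, lp.single_apply, Pi.single_apply]
  split_ifs <;> simp_all

theorem Orthonormal.sum_sq_apply_apply_le_sq_opNorm {E F ι κ : Type*} [NormedAddCommGroup E]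
    [InnerProductSpace ℝ E] [CompleteSpace E] [NormedAddCommGroup F] [NormedSpace ℝ F]
    [Fintype κ] {v : ι → E} (hv : Orthonormal ℝ v)
    (T : E →L[ℝ] ContinuousMultilinearMap ℝ (fun _ : κ => F) ℝ) {u : κ → F}
    (hu : ∀ j, ‖u j‖ ≤ 1) (s : Finset ι) : ∑ i ∈ s, T (v i) u ^ 2 ≤ ‖T‖ ^ 2 := by
  set L := (ContinuousMultilinearMap.apply ℝ _ ℝ u).comp T
  have hL : ‖L‖ ≤ ‖T‖ := by
    refine L.opNorm_le_bound (norm_nonneg T) fun x => ?_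
    calc ‖T x u‖ ≤ ‖T x‖ * ∏ j, ‖u j‖ := (T x).le_opNorm u
      _ ≤ ‖T x‖ := mul_le_of_le_one_right (norm_nonneg _)
          (prod_le_one (fun j _ => norm_nonneg _) fun j _ => hu j)
      _ ≤ ‖T‖ * ‖x‖ := T.le_opNorm x
  exact (hv.sum_sq_apply_le_sq_opNorm L s).trans (pow_le_pow_left₀ (norm_nonneg L) hL 2)

theorem MultilinearMap.map_sum_smul {R M N κ α : Type*} [CommSemiring R] [AddCommMonoid M]
    [Module R M] [AddCommMonoid N] [Module R N] [Fintype κ] [DecidableEq κ] [Fintype α]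
    (f : MultilinearMap R (fun _ : κ => M) N) (c : κ → α → R) (g : α → M) :
    f (fun j => ∑ t, c j t • g t) = ∑ i : κ → α, (∏ j, c j (i j)) • f (fun j => g (i j)) := by
  rw [f.map_sum]
  exact sum_congr rfl fun i _ => f.map_smul_univ _ _

def boolSign (b : Bool) : ℝ := if b then 1 else -1

@[simp] theorem boolSign_not (b : Bool) : boolSign (!b) = -boolSign b := by
  cases b <;> simp [boolSign]

@[simp] theorem boolSign_mul_self (b : Bool) : boolSign b * boolSign b = 1 := by
  cases b <;> simp [boolSign]

theorem abs_boolSign (b : Bool) : |boolSign b| = 1 := by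
  cases b <;> simp [boolSign]

theorem sum_boolSign_mul_boolSign {α : Type*} [Fintype α] [DecidableEq α] (a b : α) :
    ∑ η : α → Bool, boolSign (η a) * boolSign (η b) =
      if a = b then (Fintype.card (α → Bool) : ℝ) else 0 := by
  split_ifs with hab
  · simp [hab]
  · -- flipping the value at `a` is an involution that changes the sign of every term
    let flipAt : Equiv.Perm (α → Bool) := Function.Involutive.toPerm
      (fun η => Function.update η a !(η a)) fun η => by simp
    have hflip : ∀ η, boolSign (flipAt η a) * boolSign (flipAt η b) =
        -(boolSign (η a) * boolSign (η b)) := fun η => by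
      change boolSign (Function.update η a (!η a) a) *
        boolSign (Function.update η a (!η a) b) = _
      simp [Function.update_of_ne (Ne.symm hab)]
    have := Equiv.sum_comp flipAt fun η => boolSign (η a) * boolSign (η b)
    simp only [hflip, sum_neg_distrib] at this
    linarith

theorem sum_prod_boolSign_mul_prod_boolSign {κ α : Type*} [Fintype κ] [DecidableEq κ]
    [Fintype α] [DecidableEq α] (i i' : κ → α) :
    ∑ ε : κ → α → Bool, (∏ j, boolSign (ε j (i j))) * ∏ j, boolSign (ε j (i' j)) =
      if i = i' then (Fintype.card (κ → α → Bool) : ℝ) else 0 := by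
  simp_rw [← prod_mul_distrib]
  rw [← Fintype.prod_sum fun j (η : α → Bool) => boolSign (η (i j)) * boolSign (η (i' j))]
  simp_rw [sum_boolSign_mul_boolSign, Fintype.prod_ite_zero, funext_iff]
  simp

theorem sum_sq_sum_mul_eq_of_orthogonal {ε ι : Type*} [Fintype ε] [Fintype ι] [DecidableEq ι]
    {w : ε → ι → ℝ} {c : ℝ} (hw : ∀ i i', ∑ e, w e i * w e i' = if i = i' then c else 0)
    (b : ι → ℝ) : ∑ e, (∑ i, w e i * b i) ^ 2 = c * ∑ i, b i ^ 2 := by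
  calc ∑ e, (∑ i, w e i * b i) ^ 2
      = ∑ i, ∑ i', (∑ e, w e i * w e i') * (b i * b i') := by
        simp_rw [sq, sum_mul_sum, sum_mul]
        rw [sum_comm]
        refine sum_congr rfl fun i _ => ?_
        rw [sum_comm]
        exact sum_congr rfl fun i' _ => sum_congr rfl fun e _ => by ring
    _ = c * ∑ i, b i ^ 2 := by
        simp_rw [hw, ite_mul, zero_mul, sum_ite_eq, mem_univ, if_true, mul_sum, sq]

theorem e0_apply (t n : ℕ) : e0 t n = if n = t then 1 else 0 := rfl

namespace ZeroAtInftyContinuousMap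

variable {α β : Type*} (𝕜 : Type*) [TopologicalSpace α] [NontriviallyNormedField 𝕜]
  [NormedAddCommGroup β] [NormedSpace 𝕜 β]

def evalCLM (x : α) : ZeroAtInftyContinuousMap α β →L[𝕜] β :=
  LinearMap.mkContinuous
    { toFun := fun f => f x, map_add' := fun _ _ => rfl, map_smul' := fun _ _ => rfl } 1
    fun f => by simpa using (f.toBCF.norm_coe_le_norm x).trans_eq f.norm_toBCF_eq_norm

@[simp] theorem evalCLM_apply (x : α) (f : ZeroAtInftyContinuousMap α β) :
    evalCLM 𝕜 x f = f x :=
  rfl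

theorem norm_evalCLM_le (x : α) : ‖evalCLM 𝕜 (β := β) x‖ ≤ 1 :=
  LinearMap.mkContinuous_norm_le _ zero_le_one _

end ZeroAtInftyContinuousMap

theorem norm_sum_smul_e0_le_one {N : ℕ} {s : Fin N → ℝ} (hs : ∀ t, |s t| ≤ 1) :
    ‖∑ t, s t • e0 t‖ ≤ 1 := by
  rw [← ZeroAtInftyContinuousMap.norm_toBCF_eq_norm,
    BoundedContinuousFunction.norm_le zero_le_one]
  intro n
  change |ZeroAtInftyContinuousMap.evalCLM ℝ n (∑ t, s t • e0 t)| ≤ 1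
  simp only [map_sum, map_smul, ZeroAtInftyContinuousMap.evalCLM_apply, e0_apply, smul_eq_mul,
    mul_ite, mul_one, mul_zero]
  by_cases hn : n < N
  · rw [Fintype.sum_eq_single ⟨n, hn⟩ fun t ht => if_neg fun h => ht (Fin.ext h.symm),
      if_pos rfl]
    exact hs _
  · rw [sum_eq_zero fun (t : Fin N) _ => if_neg fun (h : n = t) => hn (h ▸ t.isLt)]
    simp

theorem sum_sum_sq_apply_single_e0_le (m N : ℕ)
    (T : lp (fun _ : ℕ => ℝ) 2 →L[ℝ] ContinuousMultilinearMap ℝ (fun _ : Fin m => Czero) ℝ) :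
    ∑ p ∈ range N, ∑ i : Fin m → Fin N, T (lp.single 2 p 1) (fun j => e0 (i j)) ^ 2 ≤
      ‖T‖ ^ 2 := by
  set a : ℕ → (Fin m → Fin N) → ℝ := fun p i => T (lp.single 2 p 1) (fun j => e0 (i j))
  set w : (Fin m → Fin N → Bool) → (Fin m → Fin N) → ℝ :=
    fun ε i => ∏ j, boolSign (ε j (i j))
  set c : ℝ := (Fintype.card (Fin m → Fin N → Bool) : ℝ)
  have h_test : ∀ ε, ∑ p ∈ range N, (∑ i, w ε i * a p i) ^ 2 ≤ ‖T‖ ^ 2 := fun ε => by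
    have h_expand : ∀ p, T (lp.single 2 p 1) (fun j => ∑ t, boolSign (ε j t) • e0 t) =
        ∑ i, w ε i * a p i := fun p =>
      (T (lp.single 2 p 1)).toMultilinearMap.map_sum_smul _ _
    simp_rw [← h_expand]
    exact lp.orthonormal_single_one.sum_sq_apply_apply_le_sq_opNorm T
      (fun j => norm_sum_smul_e0_le_one fun t => (abs_boolSign _).le) _
  have h_avg : ∑ ε, ∑ p ∈ range N, (∑ i, w ε i * a p i) ^ 2 =
      c * ∑ p ∈ range N, ∑ i, a p i ^ 2 := by
    rw [sum_comm, mul_sum]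
    exact sum_congr rfl fun p _ =>
      sum_sq_sum_mul_eq_of_orthogonal sum_prod_boolSign_mul_prod_boolSign _
  have hc : 0 < c := by positivity
  have := sum_le_sum fun ε (_ : ε ∈ univ) => h_test ε
  rw [h_avg, sum_const, card_univ, nsmul_eq_mul] at this
  exact le_of_mul_le_mul_left this hc

theorem exists_opNorm_le_one_apply_single_e0_eq_one (m : ℕ) :
    ∃ T : lp (fun _ : ℕ => ℝ) 2 →L[ℝ] ContinuousMultilinearMap ℝ (fun _ : Fin m => Czero) ℝ,
      ‖T‖ ≤ 1 ∧ T (lp.single 2 0 1) (fun _ => e0 0) = 1 := by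
  set M := (ContinuousMultilinearMap.mkPiAlgebra ℝ (Fin m) ℝ).compContinuousLinearMap
    fun _ => ZeroAtInftyContinuousMap.evalCLM ℝ (β := ℝ) (0 : ℕ)
  have hM : ‖M‖ ≤ 1 := calc
    ‖M‖ ≤ ‖ContinuousMultilinearMap.mkPiAlgebra ℝ (Fin m) ℝ‖ *
        ∏ _j : Fin m, ‖ZeroAtInftyContinuousMap.evalCLM ℝ (β := ℝ) (0 : ℕ)‖ :=
      ContinuousMultilinearMap.norm_compContinuousLinearMap_le _ _
    _ ≤ 1 := by
      rw [ContinuousMultilinearMap.norm_mkPiAlgebra, one_mul]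
      exact prod_le_one (fun _ _ => norm_nonneg _) fun _ _ =>
        ZeroAtInftyContinuousMap.norm_evalCLM_le ℝ _
  refine ⟨(innerSL ℝ (lp.single 2 0 1)).smulRight M, ?_, ?_⟩
  · rw [ContinuousLinearMap.norm_smulRight_apply, innerSL_apply_norm,
      lp.norm_single (by norm_num)]
    simpa using hM
  · simp [M, e0_apply]

theorem rpow_half_sum_rpow_sum_abs_rpow_two {α ι : Type*} [Fintype ι] (s : Finset α)
    (a : α → ι → ℝ) :
    (∑ p ∈ s, (∑ i, |a p i| ^ (2 : ℝ)) ^ ((1 / 2) * (2 : ℝ))) ^ ((1 : ℝ) / 2) =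
      √(∑ p ∈ s, ∑ i, a p i ^ 2) := by
  norm_num [Real.sqrt_eq_rpow]

/-- For `p = 2` and every `m = k+2 ≥ 2`, the optimal constant `C` in
`(Σ_{i₁} (Σ_{i₂,…,i_m} |T(e_{i₁},…,e_{i_m})|²)^{(1/2)·2})^{1/2} ≤ C‖T‖` for bounded `m`-linear
forms `T : ℓ₂ × c₀ × ⋯ × c₀ → ℝ` (expressed via all finite truncations of the sums) is `1`. -/
theorem stmt12 (k : ℕ) :
    IsLeast {C : ℝ |
      ∀ (T : lp (fun _ : ℕ => ℝ) 2 →L[ℝ]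
          ContinuousMultilinearMap ℝ (fun _ : Fin (k + 1) => Czero) ℝ) (N : ℕ),
        (∑ i₁ ∈ Finset.range N, (∑ i : Fin (k + 1) → Fin N,
            |T (lp.single 2 i₁ 1) (fun j => e0 (i j))| ^ (2 : ℝ)) ^ ((1 / 2) * (2 : ℝ)))
          ^ ((1 : ℝ) / 2) ≤ C * ‖T‖}
      1 := by
  refine ⟨fun T N => ?_, fun C hC => ?_⟩
  · rw [rpow_half_sum_rpow_sum_abs_rpow_two, one_mul, Real.sqrt_le_left (norm_nonneg T)]
    exact sum_sum_sq_apply_single_e0_le (k + 1) N T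
  · obtain ⟨T, hT, hT_apply⟩ := exists_opNorm_le_one_apply_single_e0_eq_one (k + 1)
    have h : 1 ≤ C * ‖T‖ := by simpa [hT_apply] using hC T 1
    rcases le_or_gt 0 C with hC0 | hC0 <;> nlinarith [norm_nonneg T]

end
end
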